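/- Let L be a cool stateful SOS specification with reader–writer extension L², and let p, p' be closed Θ-terms and s, s' states. (1) If p,s → p',s' in the operational model γ^L of L, then there exist writers c₀, c₁, c₂, c₃ of L² such that in γ^{L²}: p,s → c₀, c₀ ⇒^{s'} c₁, c₁ ⇒ c₂, p',s' → c₃, and c₃ ⇒ c₂. (2) If p,s ↓ s' in γ^L, then there exists a writer c₀ of L² such that p,s → c₀ and c₀ ⇓ s' in γ^{L²}. -/

import Mathlib

/-! # Statement 15: relating strong transitions of γ^L to weak transitions of γ^{L²} for a cool stateful SOS specification L -/
namespace RW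

/-- A deterministic reader–writer transition system over a state set `S`:
`rstep p s = c` means `p,s → c`; `wstep c = .inl (d,s)` means `c →ˢ d`;
`wstep c = .inr (.inl d)` means `c → d`; `wstep c = .inr (.inr s)` means `c ↓ s`. -/
structure DRW (S : Type) where
  Rd : Type
  Wr : Type
  rstep : Rd → S → Wr
  wstep : Wr → (Wr × S) ⊕ (Wr ⊕ S)

variable {S : Type}

/-- The output transition `c →ˢ d`. -/
def OutTr (M : DRW S) (c : M.Wr) (s : S) (d : M.Wr) : Prop := M.wstep c = .inl (d, s)

/-- The silent transition `c → d`. -/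
def TauTr (M : DRW S) (c d : M.Wr) : Prop := M.wstep c = .inr (.inl d)

/-- The termination transition `c ↓ s`. -/
def DownTr (M : DRW S) (c : M.Wr) (s : S) : Prop := M.wstep c = .inr (.inr s)

/-- The weak silent transition `c ⇒ d`: a finite chain of silent steps. -/
def WSil (M : DRW S) : M.Wr → M.Wr → Prop := Relation.ReflTransGen (TauTr M)

/-- The weak output transition `c ⇒ˢ d`: `c ⇒ c' →ˢ d` for some `c'`. -/
def WOut (M : DRW S) (c : M.Wr) (s : S) (d : M.Wr) : Prop :=
  ∃ c', WSil M c c' ∧ OutTr M c' s d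

/-- The weak termination transition `c ⇓ s`: `c ⇒ c' ↓ s` for some `c'`. -/
def WDone (M : DRW S) (c : M.Wr) (s : S) : Prop :=
  ∃ c', WSil M c c' ∧ DownTr M c' s

/-- `ReachL M c l d`: from `c` there is a chain of weak output transitions
producing the list `l` of states and ending in `d`. -/
def ReachL (M : DRW S) : M.Wr → List S → M.Wr → Prop
  | c, [], d => c = d
  | c, s :: l, d => ∃ c', WOut M c s c' ∧ ReachL M c' l d

/-- `TrcEntry M c n v` holds iff the `n`-th entry (0-indexed) of the trace
`trc^w(c)` is `v`, where `v = .inl s` tags an intermediate output state and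
`v = .inr s` tags the final state of a finite trace. -/
def TrcEntry (M : DRW S) (c : M.Wr) (n : ℕ) (v : S ⊕ S) : Prop :=
  (∃ l d s d', ReachL M c l d ∧ l.length = n ∧ WOut M d s d' ∧ v = .inl s) ∨
  (∃ l d s, ReachL M c l d ∧ l.length = n ∧ WDone M d s ∧ v = .inr s)

open Classical in
/-- The writer trace map `trc^w : X_w → 𝒮^∞`, with a (nonempty, finite or infinite)
trace encoded as a function `ℕ → Option (S ⊕ S)`: a finite trace `(s₁,…,sₙ,s)`
sends `0,…,n-1` to `some (.inl sᵢ₊₁)`, `n` to `some (.inr s)` and all larger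
numbers to `none`; an infinite trace `(s₁,s₂,…)` sends each `n` to
`some (.inl sₙ₊₁)`. -/
noncomputable def trcW (M : DRW S) (c : M.Wr) : ℕ → Option (S ⊕ S) := fun n =>
  if h : ∃ v, TrcEntry M c n v then some h.choose else none

/-- The reader trace map `trc^r : X_r → (𝒮^∞)^𝒮`: `trc^r(p)(s) = trc^w(c)` where
`p,s → c`. -/
noncomputable def trcR (M : DRW S) (p : M.Rd) (s : S) : ℕ → Option (S ⊕ S) :=
  trcW M (M.rstep p s)

open Classical in
/-- The writer cost map: `cstW M c = some (n,s)` iff `trc^w(c) = (s₁,…,sₙ,s)` is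
finite, and `none` (i.e. `*`) iff `trc^w(c)` is infinite. -/
noncomputable def cstW (M : DRW S) (c : M.Wr) : Option (ℕ × S) :=
  if h : ∃ ns : ℕ × S, trcW M c ns.1 = some (.inr ns.2) then some h.choose else none

/-- The reader cost map. -/
noncomputable def cstR (M : DRW S) (p : M.Rd) (s : S) : Option (ℕ × S) :=
  cstW M (M.rstep p s)

/-- The writer termination map: the last element of a finite trace, `none` (`*`)
for an infinite trace. -/
noncomputable def terW (M : DRW S) (c : M.Wr) : Option S := (cstW M c).map Prod.snd

/-- The reader termination map. -/
noncomputable def terR (M : DRW S) (p : M.Rd) (s : S) : Option S :=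
  (cstR M p s).map Prod.snd

end RW
namespace SOS

/-- Terms over a single-sorted algebraic signature with operation symbols `O` of
arities `ar`, with variables from `V`. -/
inductive OTm (O : Type) (ar : O → ℕ) (V : Type) : Type
  | var : V → OTm O ar V
  | op : (f : O) → (Fin (ar f) → OTm O ar V) → OTm O ar V

/-- Closed terms over the signature. -/
abbrev Tm (O : Type) (ar : O → ℕ) : Type := OTm O ar Empty

variable {O : Type} {ar : O → ℕ} {S : Type}

/-- Substitution of terms for variables. -/
def OTm.subst {V V' : Type} : OTm O ar V → (V → OTm O ar V') → OTm O ar V'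
  | .var v, σ => σ v
  | .op f as, σ => .op f (fun i => (as i).subst σ)

/-- A cool stateful SOS specification over the signature `(O, ar)` and the state
set `S`, presented by its defining data.  For each operator `f`, either

* `f` is passive, given by the map `o : S → (t,s') ⊕ s'` assigning to the current
  state `s` the conclusion of the (unique, premise-free) rule for `f` at `s`:
  either a transition `f(x₁,…,xₙ),s → t,s'` with `t` a term over the variables
  `x₁,…,xₙ`, or a termination `f(x₁,…,xₙ),s ↓ s'`; or
* `f` is active with receiving position `j`, and its rules are the patience rules
  `x_j,s → y_j,s'  ⊢  f(x₁,…,x_j,…,xₙ),s → f(x₁,…,y_j,…,xₙ),s'` together with the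
  rules `x_j,s ↓ s'  ⊢  f(x₁,…,xₙ),s → t,s''` resp. `f(x₁,…,xₙ),s ↓ s''` whose
  conclusion `o s' = (t,s'') ⊕ s''` depends only on `s'` (not on `s`), where `t`
  is a term over the variables `x₁,…,xₙ` other than `x_j`. -/
structure CoolSpec (O : Type) (ar : O → ℕ) (S : Type) where
  mode : (f : O) →
    (S → (OTm O ar (Fin (ar f)) × S) ⊕ S) ⊕
    (Σ j : Fin (ar f), S → (OTm O ar {i : Fin (ar f) // i ≠ j} × S) ⊕ S)

/-- Update of an argument tuple at position `j`. -/
def updFn {f : O} (as : Fin (ar f) → Tm O ar) (j : Fin (ar f)) (p : Tm O ar) :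
    Fin (ar f) → Tm O ar :=
  fun i => if i = j then p else as i

/-- The operational model `γ^L` of the stateful SOS specification determined by a
cool specification: `stepL C p s = .inl (p',s')` means `p,s → p',s'`, and
`stepL C p s = .inr s'` means `p,s ↓ s'`. -/
def stepL (C : CoolSpec O ar S) : Tm O ar → S → (Tm O ar × S) ⊕ S
  | .var v, _ => nomatch v
  | .op f as, s =>
    match C.mode f with
    | .inl o =>
        match o s with
        | .inl (t, s') => .inl (t.subst (fun i => as i), s')
        | .inr s' => .inr s'
    | .inr ⟨j, o⟩ =>
        match stepL C (as j) s with
        | .inl (p', s') => .inl (.op f (updFn as j p'), s')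
        | .inr s' =>
            match o s' with
            | .inl (t, s'') => .inl (t.subst (fun i => as i.1), s'')
            | .inr s'' => .inr s''

/-- Writers of the reader–writer extension `L²` of a cool specification `C`.
Readers are the closed `Θ`-terms. -/
inductive WTm (C : CoolSpec O ar S) : Type
  /-- The writer `[p]_s`. -/
  | run : Tm O ar → S → WTm C
  /-- The writer `ret_s`. -/
  | ret : S → WTm C
  /-- The writer `s.c`. -/
  | out : S → WTm C → WTm C
  /-- The writer `f̄(p₁,…,c,…,pₙ)` for an active operator `f` with receiving
  position `j` (with the writer argument in position `j`). -/
  | act : (f : O) → (j : Fin (ar f)) →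
      (o : S → (OTm O ar {i : Fin (ar f) // i ≠ j} × S) ⊕ S) →
      C.mode f = .inr ⟨j, o⟩ →
      ({i : Fin (ar f) // i ≠ j} → Tm O ar) → WTm C → WTm C

/-- The reader semantics of `L²`: `rstep2 C p s` is the unique writer `c` with
`p,s → c`. -/
def rstep2 (C : CoolSpec O ar S) (t : Tm O ar) (s : S) : WTm C :=
  match t with
  | .var v => nomatch v
  | .op f as =>
    match h : C.mode f with
    | .inl o =>
        match o s with
        | .inl (t', s') => .out s' (.run (t'.subst (fun i => as i)) s')
        | .inr s' => .ret s'
    | .inr ⟨j, o⟩ => .act f j o h (fun i => as i.1) (.run (as j) s)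

/-- The writer semantics of `L²`: `wstep2 C c = .inl (d,s)` means `c →ˢ d`,
`wstep2 C c = .inr (.inl d)` means `c → d`, and `wstep2 C c = .inr (.inr s)` means
`c ↓ s`. -/
def wstep2 (C : CoolSpec O ar S) : WTm C → (WTm C × S) ⊕ (WTm C ⊕ S)
  | .run p s => .inr (.inl (rstep2 C p s))
  | .ret s => .inr (.inr s)
  | .out s c => .inl (c, s)
  | .act f j o h ps c =>
      match wstep2 C c with
      | .inl (d, s) => .inl (.act f j o h ps d, s)
      | .inr (.inl d) => .inr (.inl (.act f j o h ps d))
      | .inr (.inr s') =>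
          match o s' with
          | .inl (t, s'') => .inl (.run (t.subst (fun i => ps i)) s'', s'')
          | .inr s'' => .inr (.inr s'')

/-- The operational model `γ^{L²}` of the reader–writer extension `L²` as a
deterministic reader–writer transition system. -/
def L2Model (C : CoolSpec O ar S) : RW.DRW S where
  Rd := Tm O ar
  Wr := WTm C
  rstep := rstep2 C
  wstep := wstep2 C

end SOS

/-! Induction on `p`. A passive operator makes its `L²` reader step emit the target state at once.
For an active operator with receiving position `j`, the reader step yields `f̄(…,[p_j]_s,…)`, and
the patience rules of `L²` replay underneath `f̄` the weak run of `p_j` given by the induction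
hypothesis; when `p_j` terminates in `s'`, the writer `f̄` fires the same rule of `f` (it depends
on `s'` only) as `γ^L` does. In the transition case `c₁` and the writer of `p',s'` need only be
joined by silent steps, because in the patience case both are `f̄` wrapped around writers that the
induction hypothesis already joins. -/

namespace SOS

open RW

variable {O : Type} {ar : O → ℕ} {S : Type} {C : CoolSpec O ar S}

theorem updFn_self {f : O} (as : Fin (ar f) → Tm O ar) (j : Fin (ar f)) (p : Tm O ar) :
    updFn as j p j = p :=
  if_pos rfl

theorem updFn_comp_val {f : O} (as : Fin (ar f) → Tm O ar) (j : Fin (ar f)) (p : Tm O ar) :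
    (fun i : {i : Fin (ar f) // i ≠ j} => updFn as j p i.1) = fun i => as i.1 :=
  funext fun i => if_neg i.2

theorem tauTr_run (p : Tm O ar) (s : S) : TauTr (L2Model C) (.run p s) (rstep2 C p s) := rfl

theorem rstep2_op_of_mode_inl {f : O} (as : Fin (ar f) → Tm O ar) (s : S)
    {o : S → (OTm O ar (Fin (ar f)) × S) ⊕ S} (hm : C.mode f = .inl o) :
    rstep2 C (.op f as) s =
      match o s with
      | .inl (t, s') => .out s' (.run (t.subst as) s')
      | .inr s' => .ret s' := by
  simp only [rstep2]
  split <;> simp_all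

theorem rstep2_op_of_mode_inr {f : O} (as : Fin (ar f) → Tm O ar) (s : S) {j : Fin (ar f)}
    {o : S → (OTm O ar {i : Fin (ar f) // i ≠ j} × S) ⊕ S} (hm : C.mode f = .inr ⟨j, o⟩) :
    rstep2 C (.op f as) s = .act f j o hm (fun i => as i.1) (.run (as j) s) := by
  simp only [rstep2]
  split
  · simp_all
  · rename_i j' o' hm'
    obtain ⟨rfl, ho⟩ := Sigma.mk.inj (Sum.inr.inj (hm'.symm.trans hm))
    cases ho
    rfl

theorem join_run_rstep2 (p : Tm O ar) (s : S) :
    Relation.Join (WSil (L2Model C)) (.run p s) (rstep2 C p s) :=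
  ⟨_, .single (tauTr_run p s), .refl⟩

section act

variable {f : O} {j : Fin (ar f)} {o : S → (OTm O ar {i : Fin (ar f) // i ≠ j} × S) ⊕ S}
  {hm : C.mode f = .inr ⟨j, o⟩} {ps : {i : Fin (ar f) // i ≠ j} → Tm O ar}

theorem tauTr_act {c d : WTm C} (h : TauTr (L2Model C) c d) :
    TauTr (L2Model C) (.act f j o hm ps c) (.act f j o hm ps d) := by
  simp_all [TauTr, L2Model, wstep2]

theorem wSil_act {c d : WTm C} (h : WSil (L2Model C) c d) :
    WSil (L2Model C) (.act f j o hm ps c) (.act f j o hm ps d) :=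
  Relation.ReflTransGen.lift (WTm.act f j o hm ps) (fun _ _ => tauTr_act) _ _ h

theorem outTr_act {c d : WTm C} {s : S} (h : OutTr (L2Model C) c s d) :
    OutTr (L2Model C) (.act f j o hm ps c) s (.act f j o hm ps d) := by
  simp_all [OutTr, L2Model, wstep2]

theorem outTr_act_of_downTr {c : WTm C} {s₁ s₂ : S} {t : OTm O ar {i : Fin (ar f) // i ≠ j}}
    (h : DownTr (L2Model C) c s₁) (ho : o s₁ = .inl (t, s₂)) :
    OutTr (L2Model C) (.act f j o hm ps c) s₂ (.run (t.subst ps) s₂) := by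
  simp_all [DownTr, OutTr, L2Model, wstep2]

theorem downTr_act_of_downTr {c : WTm C} {s₁ s₂ : S}
    (h : DownTr (L2Model C) c s₁) (ho : o s₁ = .inr s₂) :
    DownTr (L2Model C) (.act f j o hm ps c) s₂ := by
  simp_all [DownTr, L2Model, wstep2]

end act

theorem wSil_rstep2_op_act {f : O} {as : Fin (ar f) → Tm O ar} {s : S} {j : Fin (ar f)}
    {o : S → (OTm O ar {i : Fin (ar f) // i ≠ j} × S) ⊕ S} (hm : C.mode f = .inr ⟨j, o⟩)
    {c : WTm C} (h : WSil (L2Model C) (rstep2 C (as j) s) c) :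
    WSil (L2Model C) (rstep2 C (.op f as) s) (.act f j o hm (fun i => as i.1) c) := by
  rw [rstep2_op_of_mode_inr as s hm]
  exact .head (tauTr_act (tauTr_run (as j) s)) (wSil_act h)

theorem wDone_rstep2_of_stepL_eq_inr {p : Tm O ar} {s s' : S} (h : stepL C p s = .inr s') :
    WDone (L2Model C) (rstep2 C p s) s' := by
  induction p generalizing s s' with
  | var v => exact v.elim
  | op f as ih =>
    rcases hm : C.mode f with o | ⟨j, o⟩
    · rcases ho : o s with ⟨t, s₁⟩ | s₁ <;>
        simp only [stepL, hm, ho, reduceCtorEq, Sum.inr.injEq] at h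
      subst h
      rw [rstep2_op_of_mode_inl as s hm, ho]
      exact ⟨_, .refl, rfl⟩
    · rcases hq : stepL C (as j) s with ⟨q, s₁⟩ | s₁ <;>
        simp only [stepL, hm, hq, reduceCtorEq] at h
      rcases ho : o s₁ with ⟨t, s₂⟩ | s₂ <;>
        simp only [ho, reduceCtorEq, Sum.inr.injEq] at h
      subst h
      obtain ⟨c, hsil, hdown⟩ := ih j hq
      exact ⟨_, wSil_rstep2_op_act hm hsil, downTr_act_of_downTr hdown ho⟩

theorem exists_wOut_join_of_stepL_eq_inl {p p' : Tm O ar} {s s' : S}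
    (h : stepL C p s = .inl (p', s')) :
    ∃ c, WOut (L2Model C) (rstep2 C p s) s' c ∧
      Relation.Join (WSil (L2Model C)) c (rstep2 C p' s') := by
  induction p generalizing p' s s' with
  | var v => exact v.elim
  | op f as ih =>
    rcases hm : C.mode f with o | ⟨j, o⟩
    · rcases ho : o s with ⟨t, s₁⟩ | s₁ <;>
        simp only [stepL, hm, ho, reduceCtorEq, Sum.inl.injEq, Prod.mk.injEq] at h
      obtain ⟨rfl, rfl⟩ := h
      rw [rstep2_op_of_mode_inl as s hm, ho]
      exact ⟨_, ⟨_, .refl, rfl⟩, join_run_rstep2 _ _⟩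
    · rcases hq : stepL C (as j) s with ⟨q, s₁⟩ | s₁ <;>
        simp only [stepL, hm, hq, Sum.inl.injEq, Prod.mk.injEq] at h
      · obtain ⟨rfl, rfl⟩ := h
        obtain ⟨c₁, ⟨c, hsil, hout⟩, c₂, hsil₁, hsil₂⟩ := ih j hq
        have hjoin := wSil_rstep2_op_act (as := updFn as j q) (s := s₁) hm (c := c₂)
          (by rwa [updFn_self])
        rw [updFn_comp_val] at hjoin
        exact ⟨_, ⟨_, wSil_rstep2_op_act hm hsil, outTr_act hout⟩, _, wSil_act hsil₁, hjoin⟩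
      · rcases ho : o s₁ with ⟨t, s₂⟩ | s₂ <;>
          simp only [ho, reduceCtorEq, Sum.inl.injEq, Prod.mk.injEq] at h
        obtain ⟨rfl, rfl⟩ := h
        obtain ⟨c, hsil, hdown⟩ := wDone_rstep2_of_stepL_eq_inr hq
        exact ⟨_, ⟨_, wSil_rstep2_op_act hm hsil, outTr_act_of_downTr hdown ho⟩,
          join_run_rstep2 _ _⟩

/-- let `L` be a cool stateful SOS specification with
reader–writer extension `L²`, `p, p'` closed `Θ`-terms and `s, s'` states.

1. If `p,s → p',s'` in `γ^L`, then there exist writers `c₀, c₁, c₂, c₃` of `L²`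
   such that in `γ^{L²}`: `p,s → c₀`, `c₀ ⇒^{s'} c₁`, `c₁ ⇒ c₂`, `p',s' → c₃` and
   `c₃ ⇒ c₂`.
2. If `p,s ↓ s'` in `γ^L`, then there exists a writer `c₀` of `L²` such that
   `p,s → c₀` and `c₀ ⇓ s'` in `γ^{L²}`. -/
theorem stepL_to_weak_l2 (C : CoolSpec O ar S) (p p' : Tm O ar) (s s' : S) :
    (stepL C p s = .inl (p', s') →
      ∃ c₀ c₁ c₂ c₃ : WTm C,
        rstep2 C p s = c₀ ∧ WOut (L2Model C) c₀ s' c₁ ∧ WSil (L2Model C) c₁ c₂ ∧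
        rstep2 C p' s' = c₃ ∧ WSil (L2Model C) c₃ c₂) ∧
    (stepL C p s = .inr s' →
      ∃ c₀ : WTm C, rstep2 C p s = c₀ ∧ WDone (L2Model C) c₀ s') := by
  refine ⟨fun h => ?_, fun h => ⟨_, rfl, wDone_rstep2_of_stepL_eq_inr h⟩⟩
  obtain ⟨c₁, hout, c₂, hsil₁, hsil₃⟩ := exists_wOut_join_of_stepL_eq_inl h
  exact ⟨_, c₁, c₂, _, rfl, hout, hsil₁, rfl, hsil₃⟩

end SOS
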